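/- Let Q be a Dynkin quiver on Δ and let w̃ = (i_1,…,i_r) (r ∈ ℤ_{≥1}) be a Q-adapted sequence in I. Set J := {1,…,r}; for k ∈ J put k⁺ := min({j ∈ J : k < j and i_j = i_k} ∪ {r+1}), J_e := {k ∈ J : k⁺ ≤ r}, and w_{≤t} := s_{i_1}⋯s_{i_t}. Define the J×J_e matrix B^{w̃} = (b_{s,t}) by: b_{s,t} = 1 if t = s⁺; b_{s,t} = −1 if s = t⁺; b_{s,t} = c_{i_s,i_t} if s < t < s⁺ < t⁺; b_{s,t} = −c_{i_s,i_t} if t < s < t⁺ < s⁺; b_{s,t} = 0 otherwise. Define the skew-symmetric J×J matrix Λ^{w̃} = (Λ_{s,t}) by Λ_{s,t} := (ϖ_{i_s} − w_{≤s}ϖ_{i_s}, ϖ_{i_t} + w_{≤t}ϖ_{i_t}) for s < t, Λ_{t,s} = −Λ_{s,t}, and Λ_{s,s} = 0. Then (Λ^{w̃}·B^{w̃})_{s,t} = −2 d_{i_s}·δ(s=t) for all s ∈ J and t ∈ J_e; in particular the pair (Λ^{w̃}, B^{w̃}) is compatible. -/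

import Mathlib

noncomputable section

open scoped BigOperators

/-- A finite Cartan datum: a connected Dynkin diagram of finite type with vertex set `I`,
Cartan matrix `c`, symmetrizers `d`, simple roots `α`, fundamental weights `ϖ`, an invariant
symmetric bilinear form `form` (normalized so that `(α,α) = 2` for short roots, i.e. some
`d i = 1`), simple reflections `s` acting on the weight lattice `V`, the set of positive
roots `Φ`, the longest element `w0` (with induced involution `star`), and Coxeter number
`hcox`. -/
structure SSDatum where
  I : Type
  [fintypeI : Fintype I]
  [decEqI : DecidableEq I]
  [nonemptyI : Nonempty I]
  V : Type
  [acgV : AddCommGroup V]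
  [modV : Module ℚ V]
  [decEqV : DecidableEq V]
  c : I → I → ℤ
  d : I → ℤ
  α : I → V
  ϖ : I → V
  form : V → V → ℚ
  s : I → (V ≃ₗ[ℚ] V)
  Φ : Finset V
  w0 : V ≃ₗ[ℚ] V
  star : I → I
  hcox : ℤ
  c_diag : ∀ i, c i i = 2
  c_nonpos : ∀ i j, i ≠ j → c i j ≤ 0
  c_zero_sym : ∀ i j, c i j = 0 → c j i = 0
  connected : ∀ i j, Relation.ReflTransGen (fun a b => a ≠ b ∧ c a b ≠ 0) i j
  d_pos : ∀ i, 0 < d i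
  d_one : ∃ i, d i = 1
  d_symmetrize : ∀ i j, d i * c i j = d j * c j i
  exists_basis : ∃ b : Module.Basis I ℚ V, ∀ i, b i = ϖ i
  form_symm : ∀ x y, form x y = form y x
  form_add : ∀ x y z, form (x + y) z = form x z + form y z
  form_smul : ∀ (a : ℚ) (x y), form (a • x) y = a * form x y
  form_alpha : ∀ i j, form (α i) (α j) = (d i : ℚ) * (c i j : ℚ)
  form_alpha_omega : ∀ i j, form (α i) (ϖ j) = if i = j then (d i : ℚ) else 0
  form_inv : ∀ i x y, form (s i x) (s i y) = form x y
  s_omega : ∀ i j, s i (ϖ j) = ϖ j - (if i = j then (1 : ℚ) else 0) • α i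
  s_alpha : ∀ i j, s i (α j) = α j - ((c i j : ℚ)) • α i
  alpha_mem : ∀ i, α i ∈ Φ
  zero_not_mem : (0 : V) ∉ Φ
  pos_comb : ∀ β ∈ Φ, ∃ f : I → ℕ, β = ∑ i, (f i : ℚ) • α i
  s_perm : ∀ i, ∀ β ∈ Φ, β ≠ α i → s i β ∈ Φ
  w0_mem : w0 ∈ Subgroup.closure (Set.range s)
  w0_alpha : ∀ i, w0 (α i) = - α (star i)
  star_invol : ∀ i, star (star i) = i
  w0_neg : ∀ β ∈ Φ, -(w0 β) ∈ Φ
  hcox_pos : 0 < hcox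
  hcox_card : hcox * (Fintype.card I : ℤ) = 2 * (Φ.card : ℤ)

attribute [instance] SSDatum.fintypeI SSDatum.decEqI SSDatum.nonemptyI
attribute [instance] SSDatum.acgV SSDatum.modV SSDatum.decEqV

namespace SSDatum

variable (D : SSDatum)

/-- The underlying graph of the Dynkin diagram. -/
def graph : SimpleGraph D.I where
  Adj a b := a ≠ b ∧ D.c a b ≠ 0
  symm := ⟨by
    intro a b h
    exact ⟨h.1.symm, fun hz => h.2 (D.c_zero_sym b a hz)⟩⟩
  loopless := ⟨by
    intro a h
    exact h.1 rfl⟩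

/-- The graph distance `d(i,j)` in the Dynkin diagram. -/
def dist (i j : D.I) : ℕ := D.graph.dist i j

/-- The product `s_{i_1} ⋯ s_{i_r}` of simple reflections along a word. -/
def wordProd (l : List D.I) : D.V ≃ₗ[ℚ] D.V := (l.map D.s).prod

/-- The length of an element of the Weyl group. -/
def len (w : D.V ≃ₗ[ℚ] D.V) : ℕ :=
  sInf {n | ∃ l : List D.I, l.length = n ∧ D.wordProd l = w}

/-- A word is a reduced expression of its product. -/
def IsReducedWord (l : List D.I) : Prop := l.length = D.len (D.wordProd l)

/-- The map `ŵ` on `Φ⁺ × ℤ`: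
`ŵ(β,k) = (wβ, k)` if `wβ ∈ Φ⁺` and `ŵ(β,k) = (−wβ, k−1)` otherwise. -/
def hat (w : D.V ≃ₗ[ℚ] D.V) (x : D.V × ℤ) : D.V × ℤ :=
  if w x.1 ∈ D.Φ then (w x.1, x.2) else (-(w x.1), x.2 - 1)

/-- The map `(ŵ)⁻¹` on `Φ⁺ × ℤ`. -/
def hatInv (w : D.V ≃ₗ[ℚ] D.V) (x : D.V × ℤ) : D.V × ℤ :=
  if w⁻¹ x.1 ∈ D.Φ then (w⁻¹ x.1, x.2) else (-(w⁻¹ x.1), x.2 + 1)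

/-- `ξ` is a height function on the Dynkin diagram. -/
def IsHeight (ξ : D.I → ℤ) : Prop :=
  ∀ i j, D.dist i j = 1 → ξ i - ξ j = 1 ∨ ξ j - ξ i = 1

/-- `i` is a source of the Dynkin quiver `(Δ, ξ)`. -/
def IsSource (ξ : D.I → ℤ) (i : D.I) : Prop :=
  ∀ j, D.dist i j = 1 → ξ j < ξ i

/-- The height function of the reflected quiver `s_i Q`. -/
def rHeight (ξ : D.I → ℤ) (i : D.I) : D.I → ℤ :=
  fun j => if j = i then ξ i - 2 else ξ j

/-- A sequence in `I` is adapted to the Dynkin quiver `(Δ, ξ)`. -/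
def Adapted (ξ : D.I → ℤ) : List D.I → Prop
  | [] => True
  | i :: l => D.IsSource ξ i ∧ Adapted (D.rHeight ξ i) l

/-- `τ` is the Coxeter element `τ_Q` attached to the Dynkin quiver with height function `ξ`:
it has a `Q`-adapted reduced expression in which each simple reflection occurs exactly once. -/
def IsCoxeterFor (ξ : D.I → ℤ) (τ : D.V ≃ₗ[ℚ] D.V) : Prop :=
  ∃ l : List D.I, l.Nodup ∧ (∀ i, i ∈ l) ∧ D.Adapted ξ l ∧ D.wordProd l = τ

/-- `γ_i^Q = (1 - τ_Q) ϖ_i`. -/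
def gam (τ : D.V ≃ₗ[ℚ] D.V) (i : D.I) : D.V := D.ϖ i - τ (D.ϖ i)

/-- The map `φ_Q : Δ̂₀ → Φ⁺ × ℤ`, defined inductively from
`φ_Q(i, ξ_i) = (γ_i^Q, 0)` by applying `(τ̂_Q)^{∓1}` when moving `p ↦ p ± 2`. -/
def phi (ξ : D.I → ℤ) (τ : D.V ≃ₗ[ℚ] D.V) (i : D.I) (p : ℤ) : D.V × ℤ :=
  if p ≤ ξ i then (D.hat τ)^[((ξ i - p) / 2).toNat] (D.gam τ i, 0)
  else (D.hatInv τ)^[((p - ξ i) / 2).toNat] (D.gam τ i, 0)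

/-- The function `η_{i,j}^Q : ℤ → ℚ`. -/
def eta (ξ : D.I → ℤ) (τ : D.V ≃ₗ[ℚ] D.V) (i j : D.I) (u : ℤ) : ℚ :=
  if (u + ξ j - ξ i - 1) % 2 = 0 then
    D.form (D.ϖ i) ((τ ^ ((u + ξ j - ξ i - 1) / 2)) (D.gam τ j))
  else 0

end SSDatum

/-- The variable `t` of the field of formal Laurent series `ℚ((t))`. -/
def tq : LaurentSeries ℚ := HahnSeries.single 1 1

namespace SSDatum

variable (D : SSDatum)

/-- The symmetrized `t`-quantized Cartan matrix `B(t) = C(t) · D⁻¹`, where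
`C(t)_{i,i} = t + t⁻¹` and `C(t)_{i,j} = c_{i,j}` for `i ≠ j`. -/
def Bt : Matrix D.I D.I (LaurentSeries ℚ) :=
  Matrix.of fun i j =>
    (if i = j then tq + tq⁻¹ else (D.c i j : LaurentSeries ℚ)) * ((D.d j : LaurentSeries ℚ))⁻¹

/-- `b̃_{i,j}(u)`: the coefficient of `t^u` in the Laurent expansion of `(B(t)⁻¹)_{i,j}`. -/
def btilde (i j : D.I) (u : ℤ) : ℚ := ((D.Bt)⁻¹ i j).coeff u

/-- `Ñ(i,p;j,s) = b̃_{i,j}(p−s−1) − b̃_{i,j}(s−p−1) − b̃_{i,j}(p−s+1) + b̃_{i,j}(s−p+1)`. -/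
def Ncal (i : D.I) (p : ℤ) (j : D.I) (q : ℤ) : ℚ :=
  D.btilde i j (p - q - 1) - D.btilde i j (q - p - 1)
    - D.btilde i j (p - q + 1) + D.btilde i j (q - p + 1)

end SSDatum

namespace SSDatum

variable (D : SSDatum)

/-- `k⁺` for a sequence `ι : Fin r → I` (0-indexed, with sentinel value `r`):
the least index `j > k` with `ι j = ι k`, or `r` if there is none. -/
def kplus {r : ℕ} (ι : Fin r → D.I) (k : Fin r) : ℕ :=
  sInf (insert r {j : ℕ | ∃ h : j < r, k.val < j ∧ ι ⟨j, h⟩ = ι k})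

/-- The exchange matrix `B^{w̃}` attached to a sequence `w̃ = ι`. -/
def bW {r : ℕ} (ι : Fin r → D.I) (a b : Fin r) : ℤ :=
  if b.val = D.kplus ι a then 1
  else if a.val = D.kplus ι b then -1
  else if a.val < b.val ∧ b.val < D.kplus ι a ∧ D.kplus ι a < D.kplus ι b then
    D.c (ι a) (ι b)
  else if b.val < a.val ∧ a.val < D.kplus ι b ∧ D.kplus ι b < D.kplus ι a then
    -(D.c (ι a) (ι b))
  else 0

/-- The skew-symmetric matrix `Λ^{w̃}` attached to a sequence `w̃ = ι`:
`Λ_{a,b} = (ϖ_{i_a} − w_{≤a} ϖ_{i_a}, ϖ_{i_b} + w_{≤b} ϖ_{i_b})` for `a < b`. -/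
def lamW {r : ℕ} (ι : Fin r → D.I) (a b : Fin r) : ℚ :=
  if a < b then
    D.form (D.ϖ (ι a) - D.wordProd ((List.ofFn ι).take (a.val + 1)) (D.ϖ (ι a)))
      (D.ϖ (ι b) + D.wordProd ((List.ofFn ι).take (b.val + 1)) (D.ϖ (ι b)))
  else if b < a then
    - D.form (D.ϖ (ι b) - D.wordProd ((List.ofFn ι).take (b.val + 1)) (D.ϖ (ι b)))
      (D.ϖ (ι a) + D.wordProd ((List.ofFn ι).take (a.val + 1)) (D.ϖ (ι a)))
  else 0

end SSDatum

/-!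
Write `z^n_u = ϖ_{i_u} - s_{i_n} ⋯ s_{i_u} ϖ_{i_u}` (positions counted from `0`) and, for a
column `b` with `b⁺ < r`, `P(n) = ∑_u b_{u,b} z^n_u`. From
`z^n_u = s_{i_n} z^{n+1}_u + [n ≤ u, i_u = i_n] α_{i_n}` one gets
`P(n) = s_{i_n} P(n+1) + S_n α_{i_n}` with `S_n = ∑_{u ≥ n, i_u = i_n} b_{u,b}`. Along a
`Q`-adapted word every neighbour of `i_b` occurs exactly once between `b` and `b⁺`; this
telescopes `S_n` to `-1` for `n ∈ {b, b⁺}`, to `-c_{i_n,i_b}` for `b < n < b⁺` and to `0`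
otherwise, and downward induction gives `P(n) = -α_{i_b}` for `b < n ≤ b⁺` and `P(n) = 0`
otherwise.
Finally `Λ_{a,u} = 2 (ϖ_{i_a}, z^{a+1}_u) - (ϖ_{i_a} + w_{≤a} ϖ_{i_a}, z^0_u)`, so
`(Λ B)_{a,b} = 2 (ϖ_{i_a}, P(a+1)) - (ϖ_{i_a} + w_{≤a} ϖ_{i_a}, P(0))
  = -2 [b ≤ a < b⁺] (ϖ_{i_a}, α_{i_b}) = -2 d_{i_a} δ_{a,b}`.
-/

open Finset

namespace SSDatum

variable (D : SSDatum)

def formₗ : D.V →ₗ[ℚ] D.V →ₗ[ℚ] ℚ :=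
  LinearMap.mk₂ ℚ D.form D.form_add D.form_smul
    (fun x y z => by rw [D.form_symm, D.form_add, D.form_symm y, D.form_symm z])
    (fun a x y => by rw [D.form_symm, D.form_smul, D.form_symm, smul_eq_mul])

@[simp] lemma formₗ_apply (x y : D.V) : D.formₗ x y = D.form x y := rfl

lemma form_wordProd (l : List D.I) (x y : D.V) :
    D.form (D.wordProd l x) (D.wordProd l y) = D.form x y := by
  induction l with
  | nil => rfl
  | cons i l ih => simpa [wordProd, D.form_inv] using ih

lemma wordProd_cons (i : D.I) (l : List D.I) :
    D.wordProd (i :: l) = D.s i * D.wordProd l := by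
  simp [wordProd]

lemma wordProd_append (l₁ l₂ : List D.I) :
    D.wordProd (l₁ ++ l₂) = D.wordProd l₁ * D.wordProd l₂ := by
  simp [wordProd]

lemma isHeight_rHeight {ξ : D.I → ℤ} {i : D.I} (hξ : D.IsHeight ξ) (hi : D.IsSource ξ i) :
    D.IsHeight (D.rHeight ξ i) := by
  intro a b hab
  have hne : a ≠ b := by rintro rfl; simp [dist] at hab
  have hba : D.dist b a = 1 := by rwa [dist, SimpleGraph.dist_comm]
  have h := hξ a b hab
  simp only [rHeight]
  split_ifs with ha hb hb
  · exact absurd (ha.trans hb.symm) hne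
  · subst ha; have := hi b hab; omega
  · subst hb; have := hi a hba; omega
  · exact h

section Word

variable {r : ℕ} (ι : Fin r → D.I) {ξ : D.I → ℤ}

def seg (n m : ℕ) : List D.I := ((List.ofFn ι).take m).drop n

lemma seg_of_le {n m : ℕ} (h : m ≤ n) : D.seg ι n m = [] :=
  List.drop_eq_nil_of_le (by simp only [List.length_take, List.length_ofFn, inf_le_iff]; omega)

lemma seg_eq_cons {n m : ℕ} (hnm : n < m) (hm : m ≤ r) :
    D.seg ι n m = ι ⟨n, by omega⟩ :: D.seg ι (n + 1) m := by
  rw [seg, List.drop_eq_getElem_cons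
    (by simp only [List.length_take, List.length_ofFn, lt_inf_iff]; omega)]
  simp [seg]

lemma take_append_seg {n m : ℕ} (h : n ≤ m) :
    (List.ofFn ι).take n ++ D.seg ι n m = (List.ofFn ι).take m := by
  conv_rhs => rw [← List.take_append_drop n ((List.ofFn ι).take m), List.take_take,
    min_eq_left h]
  rfl

lemma lt_kplus (k : Fin r) : k.val < D.kplus ι k := by
  rcases Nat.sInf_mem (⟨r, Set.mem_insert _ _⟩ : (insert r {j : ℕ | ∃ h : j < r,
      k.val < j ∧ ι ⟨j, h⟩ = ι k}).Nonempty) with h | ⟨_, h, _⟩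
  · unfold kplus; rw [h]; exact k.isLt
  · exact h

lemma apply_kplus (k : Fin r) (h : D.kplus ι k < r) : ι ⟨D.kplus ι k, h⟩ = ι k := by
  rcases Nat.sInf_mem (⟨r, Set.mem_insert _ _⟩ : (insert r {j : ℕ | ∃ h : j < r,
      k.val < j ∧ ι ⟨j, h⟩ = ι k}).Nonempty) with h' | ⟨_, _, h'⟩
  · exact absurd h' (ne_of_lt h)
  · exact h'

lemma kplus_le_of_apply_eq {k u : Fin r} (h : k < u) (hu : ι u = ι k) : D.kplus ι k ≤ u :=
  Nat.sInf_le (Set.mem_insert_of_mem _ ⟨u.isLt, h, hu⟩)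

lemma apply_ne_of_lt_kplus {k m : Fin r} (h : k < m) (hm : m.val < D.kplus ι k) :
    ι m ≠ ι k :=
  fun hmk => (D.kplus_le_of_apply_eq ι h hmk).not_gt hm

lemma kplus_injective {u u' : Fin r} (h : D.kplus ι u = D.kplus ι u')
    (hr : D.kplus ι u < r) : u = u' := by
  have hu := D.apply_kplus ι u hr
  have hu' := D.apply_kplus ι u' (h ▸ hr)
  simp only [h] at hu
  rcases lt_trichotomy u u' with hlt | heq | hgt
  · exact absurd (hu'.symm.trans hu) (D.apply_ne_of_lt_kplus ι hlt (h ▸ D.lt_kplus ι u'))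
  · exact heq
  · exact absurd (hu.symm.trans hu') (D.apply_ne_of_lt_kplus ι hgt (h ▸ D.lt_kplus ι u))

lemma exists_kplus_eq {v X : Fin r} (hvX : v < X) (hX : ι X = ι v) :
    ∃ p : Fin r, v ≤ p ∧ ι p = ι v ∧ D.kplus ι p = X := by
  obtain ⟨p, hp, hmax⟩ := (Finset.univ.filter fun w : Fin r => v ≤ w ∧ w < X ∧ ι w = ι v
    ).exists_max_image id ⟨v, by simp [hvX]⟩
  simp only [Finset.mem_filter, Finset.mem_univ, true_and, id] at hp hmax
  refine ⟨p, hp.1, hp.2.2, le_antisymm (D.kplus_le_of_apply_eq ι hp.2.1 (hX.trans hp.2.2.symm))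
    (not_lt.mp fun hlt => ?_)⟩
  have hr : D.kplus ι p < r := hlt.trans X.isLt
  have := hmax ⟨_, hr⟩
    ⟨hp.1.trans (D.lt_kplus ι p).le, hlt, (D.apply_kplus ι p hr).trans hp.2.2⟩
  exact this.not_gt (D.lt_kplus ι p)

lemma sum_occurrences_kplus_eq (v X : Fin r) (hX : ι X = ι v) :
    ∑ u, (if v ≤ u ∧ ι u = ι v ∧ D.kplus ι u = X then 1 else 0 : ℤ) =
      if v < X then 1 else 0 := by
  split_ifs with hvX
  · obtain ⟨p, hvp, hp, hpX⟩ := D.exists_kplus_eq ι hvX hX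
    rw [Finset.sum_eq_single p (fun u _ hup => if_neg fun hu => hup ?_) (by simp),
      if_pos ⟨hvp, hp, hpX⟩]
    exact D.kplus_injective ι (hu.2.2.trans hpX.symm) (hu.2.2 ▸ X.isLt)
  · refine Finset.sum_eq_zero fun u _ => if_neg fun hu => hvX ?_
    exact lt_of_le_of_lt hu.1 (show u.val < X from hu.2.2 ▸ D.lt_kplus ι u)

lemma sum_occurrences_eq (v Y : Fin r) (hY : ι Y = ι v) :
    ∑ u, (if v ≤ u ∧ ι u = ι v ∧ u = Y then 1 else 0 : ℤ) =
      if v ≤ Y then 1 else 0 := by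
  rw [Finset.sum_eq_single Y (fun u _ huY => if_neg fun hu => huY hu.2.2) (by simp)]
  simp [hY]

def occCount (x : D.I) (m : ℕ) : ℕ := #{v : Fin r | v.val < m ∧ ι v = x}

lemma occCount_add {m m' : ℕ} (h : m ≤ m') (x : D.I) :
    D.occCount ι x m' =
      D.occCount ι x m + #{v : Fin r | m ≤ v.val ∧ v.val < m' ∧ ι v = x} := by
  simp only [occCount, Finset.card_filter, ← Finset.sum_add_distrib]
  refine Finset.sum_congr rfl fun v _ => ?_
  by_cases hx : ι v = x
  · simp only [hx, and_true]; split_ifs <;> omega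
  · simp [hx]

lemma occCount_succ {m : ℕ} (hm : m < r) (x : D.I) :
    D.occCount ι x (m + 1) = D.occCount ι x m + if ι ⟨m, hm⟩ = x then 1 else 0 := by
  rw [D.occCount_add ι m.le_succ, Finset.card_filter, Finset.sum_eq_single ⟨m, hm⟩
    (fun v _ hv => if_neg fun h => hv (Fin.ext (Nat.le_antisymm (Nat.lt_succ_iff.mp h.2.1) h.1)))
    (by simp)]
  simp

/-- The height function of the quiver obtained by reflecting at the first `m` letters. -/
def heightAfter (ξ : D.I → ℤ) (m : ℕ) (x : D.I) : ℤ := ξ x - 2 * D.occCount ι x m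

lemma isHeight_adapted_heightAfter (hξ : D.IsHeight ξ)
    (hadapt : D.Adapted ξ (List.ofFn ι)) {m : ℕ} (hm : m ≤ r) :
    D.IsHeight (D.heightAfter ι ξ m) ∧
      D.Adapted (D.heightAfter ι ξ m) ((List.ofFn ι).drop m) := by
  induction m with
  | zero =>
    have h0 : D.heightAfter ι ξ 0 = ξ := by funext x; simp [heightAfter, occCount]
    rw [h0]
    exact ⟨hξ, hadapt⟩
  | succ m ih =>
    obtain ⟨hH, hA⟩ := ih (by omega)
    rw [List.drop_eq_getElem_cons (by simp only [List.length_ofFn]; omega),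
      List.getElem_ofFn] at hA
    have hr : D.rHeight (D.heightAfter ι ξ m) (ι ⟨m, hm⟩) = D.heightAfter ι ξ (m + 1) := by
      funext x
      simp only [rHeight, heightAfter, D.occCount_succ ι hm]
      by_cases hx : x = ι ⟨m, hm⟩
      · subst hx; simp only [↓reduceIte, Nat.cast_add, Nat.cast_one]; ring
      · rw [if_neg hx, if_neg (Ne.symm hx)]; simp
    exact hr ▸ ⟨D.isHeight_rHeight hH hA.1, hA.2⟩

lemma heightAfter_of_dist_eq_one (hξ : D.IsHeight ξ)
    (hadapt : D.Adapted ξ (List.ofFn ι)) (m : Fin r) {k : D.I} (hk : D.dist (ι m) k = 1) :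
    D.heightAfter ι ξ m k = D.heightAfter ι ξ m (ι m) - 1 := by
  obtain ⟨hH, hA⟩ := D.isHeight_adapted_heightAfter ι hξ hadapt m.isLt.le
  rw [List.drop_eq_getElem_cons (by simp), List.getElem_ofFn, Fin.eta] at hA
  have h1 := hA.1 k hk
  have h2 := hH _ _ hk
  omega

/-- Both `b` and `b⁺` are sources of the reflected quivers, so between them the neighbour `k`
is reflected as often as `ι b`, that is once. -/
lemma existsUnique_between_kplus (hξ : D.IsHeight ξ)
    (hadapt : D.Adapted ξ (List.ofFn ι)) {b : Fin r} (hb : D.kplus ι b < r) {k : D.I}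
    (hk : k ≠ ι b) (hc : D.c k (ι b) ≠ 0) :
    ∃! V : Fin r, b < V ∧ V.val < D.kplus ι b ∧ ι V = k := by
  have hbk : D.dist (ι b) k = 1 :=
    SimpleGraph.dist_eq_one_iff_adj.mpr ⟨hk.symm, fun h => hc (D.c_zero_sym _ _ h)⟩
  have h₁ := D.heightAfter_of_dist_eq_one ι hξ hadapt b hbk
  have h₂ := D.heightAfter_of_dist_eq_one ι hξ hadapt ⟨_, hb⟩
    (k := k) (by rwa [D.apply_kplus ι b hb])
  rw [D.apply_kplus ι b hb] at h₂
  have hbb := D.lt_kplus ι b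
  have hself : #{v : Fin r | b.val ≤ v.val ∧ v.val < D.kplus ι b ∧ ι v = ι b} = 1 := by
    refine Finset.card_eq_one.mpr ⟨b, Finset.ext fun v => ?_⟩
    simp only [Finset.mem_filter, Finset.mem_univ, true_and, Finset.mem_singleton]
    refine ⟨fun ⟨h1, h2, h3⟩ => ?_, by rintro rfl; exact ⟨le_rfl, hbb, rfl⟩⟩
    by_contra hvb
    exact D.apply_ne_of_lt_kplus ι (lt_of_le_of_ne h1 (Ne.symm hvb)) h2 h3
  have hother : #{v : Fin r | b.val ≤ v.val ∧ v.val < D.kplus ι b ∧ ι v = k} =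
      #{v : Fin r | b < v ∧ v.val < D.kplus ι b ∧ ι v = k} := by
    refine congrArg _ (Finset.filter_congr fun v _ => ⟨fun ⟨h1, h2, h3⟩ => ⟨?_, h2, h3⟩,
      fun ⟨h1, h2, h3⟩ => ⟨h1.le, h2, h3⟩⟩)
    refine lt_of_le_of_ne h1 fun h => hk ?_
    rw [← h3, h]
  have hi := D.occCount_add ι hbb.le (ι b)
  have hk' := D.occCount_add ι hbb.le k
  simp only [heightAfter] at h₁ h₂
  have hcard : #{v : Fin r | b < v ∧ v.val < D.kplus ι b ∧ ι v = k} = 1 := by omega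
  simpa using Finset.card_eq_one_iff_existsUnique.mp hcard

lemma sum_occurrences_sub (v X Y : Fin r) (hX : ι X = ι v) (hY : ι Y = ι v) :
    ∑ u, (if v ≤ u ∧ ι u = ι v then
        (if D.kplus ι u = X then 1 else 0) - (if u = Y then 1 else 0) else 0 : ℤ) =
      (if v < X then 1 else 0) - (if v ≤ Y then 1 else 0) := by
  rw [← D.sum_occurrences_kplus_eq ι v X hX, ← D.sum_occurrences_eq ι v Y hY,
    ← Finset.sum_sub_distrib]
  refine Finset.sum_congr rfl fun u _ => ?_
  by_cases h : v ≤ u ∧ ι u = ι v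
  · simp [h]
  · rw [if_neg h, if_neg fun h' => h ⟨h'.1, h'.2.1⟩, if_neg fun h' => h ⟨h'.1, h'.2.1⟩,
      sub_self]

lemma bW_of_apply_eq {b : Fin r} (hb : D.kplus ι b < r) {u : Fin r} (hu : ι u = ι b) :
    D.bW ι u b =
      (if D.kplus ι u = b then 1 else 0) - (if u = ⟨D.kplus ι b, hb⟩ then 1 else 0) := by
  have h₁ : ¬ (u.val < b.val ∧ b.val < D.kplus ι u) := fun h =>
    D.apply_ne_of_lt_kplus ι h.1 h.2 hu.symm
  have h₂ : ¬ (b.val < u.val ∧ u.val < D.kplus ι b) := fun h =>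
    D.apply_ne_of_lt_kplus ι h.1 h.2 hu
  have := D.lt_kplus ι u
  have := D.lt_kplus ι b
  unfold bW
  simp only [Fin.ext_iff]
  split_ifs <;> omega

lemma bW_of_apply_ne {b : Fin r} (hb : D.kplus ι b < r) {u : Fin r} (hu : ι u ≠ ι b) :
    D.bW ι u b =
      if u.val < b.val ∧ b.val < D.kplus ι u ∧ D.kplus ι u < D.kplus ι b then
        D.c (ι u) (ι b)
      else if b.val < u.val ∧ u.val < D.kplus ι b ∧ D.kplus ι b < D.kplus ι u then
        -D.c (ι u) (ι b)
      else 0 := by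
  have h₁ : b.val ≠ D.kplus ι u := fun h =>
    hu ((D.apply_kplus ι u (h ▸ b.isLt)).symm.trans (congrArg ι (Fin.ext h.symm)))
  have h₂ : u.val ≠ D.kplus ι b := fun h =>
    hu ((congrArg ι (Fin.ext h)).trans (D.apply_kplus ι b hb))
  rw [bW, if_neg h₁, if_neg h₂]

lemma bW_of_between {b : Fin r} (hb : D.kplus ι b < r) {u V : Fin r} (hu : ι u ≠ ι b)
    (hV : b < V ∧ V.val < D.kplus ι b ∧ ι V = ι u)
    (hVu : ∀ W : Fin r, b < W ∧ W.val < D.kplus ι b ∧ ι W = ι u → W = V) :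
    D.bW ι u b = D.c (ι u) (ι b) *
      ((if D.kplus ι u = V then 1 else 0) - (if u = V then 1 else 0)) := by
  obtain ⟨hbV, hVb, hVu'⟩ := hV
  have hu' := D.lt_kplus ι u
  have hV' := D.lt_kplus ι V
  have h₃ : u.val < b.val ∧ b.val < D.kplus ι u ∧ D.kplus ι u < D.kplus ι b ↔
      D.kplus ι u = V := by
    constructor
    · rintro ⟨h₁, h₂, h₃⟩
      have hr : D.kplus ι u < r := h₃.trans hb
      exact congrArg Fin.val (hVu ⟨_, hr⟩ ⟨h₂, h₃, D.apply_kplus ι u hr⟩)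
    · intro h
      have hub : u.val < b.val := by
        by_contra! hbu
        rcases hbu.lt_or_eq with hbu | hbu
        · have := hVu u ⟨hbu, by omega, rfl⟩
          omega
        · exact hu (congrArg ι (Fin.ext hbu.symm))
      omega
  have h₄ : b.val < u.val ∧ u.val < D.kplus ι b ∧ D.kplus ι b < D.kplus ι u ↔ u = V := by
    constructor
    · rintro ⟨h₁, h₂, -⟩
      exact hVu u ⟨h₁, h₂, rfl⟩
    · rintro rfl
      refine ⟨hbV, hVb, lt_of_not_ge fun hle => ?_⟩
      have hr : D.kplus ι u < r := lt_of_le_of_lt hle hb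
      rcases hle.lt_or_eq with hlt | heq
      · have := hVu ⟨_, hr⟩
          ⟨show b.val < D.kplus ι u by omega, hlt, D.apply_kplus ι u hr⟩
        exact absurd (congrArg Fin.val this) (ne_of_gt hV')
      · exact hu ((D.apply_kplus ι u hr).symm.trans (by simp only [heq, D.apply_kplus ι b hb]))
  rw [D.bW_of_apply_ne ι hb hu, if_congr h₃ rfl rfl, if_congr h₄ rfl rfl]
  split_ifs with h h' <;> simp_all

def colSum (b v : Fin r) : ℤ := ∑ u, if v ≤ u ∧ ι u = ι v then D.bW ι u b else 0

lemma colSum_eq (hξ : D.IsHeight ξ) (hadapt : D.Adapted ξ (List.ofFn ι))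
    {b : Fin r} (hb : D.kplus ι b < r) (v : Fin r) :
    D.colSum ι b v =
      if v = b ∨ v.val = D.kplus ι b then -1
      else if b < v ∧ v.val < D.kplus ι b then -D.c (ι v) (ι b) else 0 := by
  have hbb := D.lt_kplus ι b
  by_cases hvb : ι v = ι b
  · have hsum := D.sum_occurrences_sub ι v b ⟨_, hb⟩ hvb.symm
      ((D.apply_kplus ι b hb).trans hvb.symm)
    have hwin : ¬ (b < v ∧ v.val < D.kplus ι b) := fun h =>
      D.apply_ne_of_lt_kplus ι h.1 h.2 hvb
    have hcol : D.colSum ι b v =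
        (if v < b then 1 else 0) - if v ≤ ⟨D.kplus ι b, hb⟩ then 1 else 0 := by
      rw [colSum, ← hsum]
      refine Finset.sum_congr rfl fun u _ => ?_
      by_cases h : v ≤ u ∧ ι u = ι v
      · rw [if_pos h, if_pos h, D.bW_of_apply_eq ι hb (h.2.trans hvb)]
      · rw [if_neg h, if_neg h]
    rw [hcol]
    simp only [Fin.lt_def, Fin.le_def, Fin.ext_iff] at hwin ⊢
    split_ifs <;> omega
  have hv₁ : v ≠ b := fun h => hvb (congrArg ι h)
  have hv₂ : v.val ≠ D.kplus ι b := fun h =>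
    hvb ((congrArg ι (Fin.ext h : v = ⟨_, hb⟩)).trans (D.apply_kplus ι b hb))
  rw [if_neg (not_or.mpr ⟨hv₁, hv₂⟩)]
  by_cases hc : D.c (ι v) (ι b) = 0
  · rw [hc, neg_zero, ite_self, colSum]
    refine Finset.sum_eq_zero fun u _ => ?_
    by_cases h : v ≤ u ∧ ι u = ι v
    · rw [if_pos h, D.bW_of_apply_ne ι hb (by rw [h.2]; exact hvb), h.2, hc]
      simp
    · rw [if_neg h]
  · obtain ⟨V, hV, hVu⟩ := D.existsUnique_between_kplus ι hξ hadapt hb hvb hc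
    have hcol : D.colSum ι b v =
        D.c (ι v) (ι b) * ((if v < V then 1 else 0) - if v ≤ V then 1 else 0) := by
      rw [← D.sum_occurrences_sub ι v V V hV.2.2 hV.2.2, Finset.mul_sum, colSum]
      refine Finset.sum_congr rfl fun u _ => ?_
      by_cases h : v ≤ u ∧ ι u = ι v
      · rw [if_pos h, if_pos h, D.bW_of_between ι hb (V := V) (by rw [h.2]; exact hvb)
          (by rw [h.2]; exact hV) (by rw [h.2]; exact hVu), h.2]
      · rw [if_neg h, if_neg h, mul_zero]
    rw [hcol]
    by_cases hw : b < v ∧ v.val < D.kplus ι b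
    · obtain rfl := hVu v ⟨hw.1, hw.2, rfl⟩
      simp [hw]
    · have hvV : v ≠ V := fun h => hw (h ▸ ⟨hV.1, hV.2.1⟩)
      rw [if_neg hw]
      simp [lt_iff_le_and_ne, hvV]

/-- `ϖ_{i_u} - s_{i_n} ⋯ s_{i_u} ϖ_{i_u}` (zero when `u < n`). -/
def weightDiff (n : ℕ) (u : Fin r) : D.V :=
  D.ϖ (ι u) - D.wordProd (D.seg ι n (u.val + 1)) (D.ϖ (ι u))

lemma weightDiff_of_lt {n : ℕ} {u : Fin r} (h : u.val < n) : D.weightDiff ι n u = 0 := by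
  rw [weightDiff, D.seg_of_le ι h, wordProd, List.map_nil, List.prod_nil]
  exact sub_self _

lemma weightDiff_eq_s_add (n u : Fin r) :
    D.weightDiff ι n u =
      D.s (ι n) (D.weightDiff ι (n + 1) u) +
        if n ≤ u ∧ ι u = ι n then D.α (ι n) else 0 := by
  by_cases hnu : n ≤ u
  · rw [weightDiff, weightDiff, D.seg_eq_cons ι (Nat.lt_succ_of_le hnu) u.isLt, Fin.eta,
      wordProd_cons, LinearEquiv.mul_apply, map_sub, D.s_omega]
    by_cases h : ι u = ι n
    · simp only [h, ↓reduceIte, one_smul, hnu, and_self]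
      abel
    · simp [hnu, h, Ne.symm h]
  · rw [D.weightDiff_of_lt ι (not_le.mp hnu), D.weightDiff_of_lt ι (by omega), map_zero,
      if_neg fun h => hnu h.1, add_zero]

def colWeightSum (b : Fin r) (n : ℕ) : D.V := ∑ u, (D.bW ι u b : ℚ) • D.weightDiff ι n u

lemma colWeightSum_eq_s_add (b n : Fin r) :
    D.colWeightSum ι b n =
      D.s (ι n) (D.colWeightSum ι b (n + 1)) + (D.colSum ι b n : ℚ) • D.α (ι n) := by
  simp only [colWeightSum, colSum, D.weightDiff_eq_s_add ι n, smul_add, Finset.sum_add_distrib,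
    map_sum, map_smul, Int.cast_sum, Finset.sum_smul, Int.cast_ite, Int.cast_zero, smul_ite,
    ite_smul, smul_zero, zero_smul]

lemma colWeightSum_eq (hξ : D.IsHeight ξ) (hadapt : D.Adapted ξ (List.ofFn ι))
    {b : Fin r} (hb : D.kplus ι b < r) {n : ℕ} (hn : n ≤ r) :
    D.colWeightSum ι b n = if b.val < n ∧ n ≤ D.kplus ι b then -D.α (ι b) else 0 := by
  have hbb := D.lt_kplus ι b
  induction hn using Nat.decreasingInduction with
  | self =>
    rw [if_neg (by omega)]
    exact Finset.sum_eq_zero fun u _ => by rw [D.weightDiff_of_lt ι u.isLt, smul_zero]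
  | of_succ n hn ih =>
    obtain ⟨m, rfl⟩ : ∃ m : Fin r, m.val = n := ⟨⟨n, hn⟩, rfl⟩
    rw [D.colWeightSum_eq_s_add ι b m, ih, D.colSum_eq ι hξ hadapt hb]
    rcases (by omega : m.val < b ∨ m = b ∨ (b < m ∧ m.val < D.kplus ι b) ∨
      m.val = D.kplus ι b ∨ D.kplus ι b < m.val) with h | rfl | h | h | h
    · rw [if_neg (by omega), if_neg (by omega), if_neg (by omega), if_neg (by omega)]
      simp
    · rw [if_pos (by omega), if_pos (Or.inl rfl), if_neg (by omega), map_neg, D.s_alpha,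
        D.c_diag]
      module
    · rw [if_pos (by omega), if_neg (by omega), if_pos h, if_pos (by omega), map_neg, D.s_alpha]
      push_cast
      module
    · have hm : ι m = ι b := (congrArg ι (Fin.ext h)).trans (D.apply_kplus ι b hb)
      rw [if_neg (by omega), if_pos (Or.inr h), if_pos (by omega), hm]
      simp
    · rw [if_neg (by omega), if_neg (by omega), if_neg (by omega), if_neg (by omega)]
      simp

lemma lamW_eq (a u : Fin r) :
    D.lamW ι a u = 2 * D.form (D.ϖ (ι a)) (D.weightDiff ι (a + 1) u) -
      D.form (D.ϖ (ι a) + D.wordProd ((List.ofFn ι).take (a + 1)) (D.ϖ (ι a)))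
        (D.weightDiff ι 0 u) := by
  have h₀ : D.weightDiff ι 0 u =
      D.ϖ (ι u) - D.wordProd ((List.ofFn ι).take (u + 1)) (D.ϖ (ι u)) := rfl
  rw [h₀]
  rcases lt_trichotomy a u with h | rfl | h
  · have hy : D.wordProd ((List.ofFn ι).take (u + 1)) =
        D.wordProd ((List.ofFn ι).take (a + 1)) * D.wordProd (D.seg ι (a + 1) (u + 1)) := by
      rw [← D.take_append_seg ι (by omega : a.val + 1 ≤ u.val + 1), wordProd_append]
    rw [lamW, if_pos h, weightDiff, hy, LinearEquiv.mul_apply]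
    simp only [← formₗ_apply, map_add, map_sub, LinearMap.add_apply, LinearMap.sub_apply]
    simp only [formₗ_apply, D.form_wordProd]
    ring
  · rw [lamW, if_neg (lt_irrefl a), if_neg (lt_irrefl a), D.weightDiff_of_lt ι (by omega)]
    simp only [← formₗ_apply, map_add, map_sub, map_zero, LinearMap.add_apply]
    simp only [formₗ_apply, D.form_wordProd,
      D.form_symm (D.wordProd ((List.ofFn ι).take (a + 1)) _) (D.ϖ (ι a))]
    ring
  · rw [lamW, if_neg (lt_asymm h), if_pos h, D.weightDiff_of_lt ι (by omega : u.val < a + 1),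
      D.form_symm]
    simp only [← formₗ_apply, map_zero]
    ring

lemma sum_form_mul_bW (x : D.V) (b : Fin r) (n : ℕ) :
    ∑ u, D.form x (D.weightDiff ι n u) * (D.bW ι u b : ℚ) =
      D.form x (D.colWeightSum ι b n) := by
  simp only [colWeightSum, ← formₗ_apply, map_sum, map_smul, smul_eq_mul, mul_comm]

lemma colWeightSum_zero {b : Fin r} (hξ : D.IsHeight ξ) (hadapt : D.Adapted ξ (List.ofFn ι))
    (hb : D.kplus ι b < r) : D.colWeightSum ι b 0 = 0 := by
  rw [D.colWeightSum_eq ι hξ hadapt hb (Nat.zero_le r), if_neg (by omega)]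

lemma form_colWeightSum_succ {b : Fin r} (hξ : D.IsHeight ξ)
    (hadapt : D.Adapted ξ (List.ofFn ι)) (hb : D.kplus ι b < r) (a : Fin r) :
    D.form (D.ϖ (ι a)) (D.colWeightSum ι b (a + 1)) =
      if a = b then -(D.d (ι a) : ℚ) else 0 := by
  rw [D.colWeightSum_eq ι hξ hadapt hb a.isLt]
  by_cases hab : a = b
  · subst hab
    rw [if_pos ⟨Nat.lt_succ_self _, D.lt_kplus ι a⟩, if_pos rfl, ← formₗ_apply, map_neg,
      formₗ_apply, D.form_symm, D.form_alpha_omega, if_pos rfl]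
  · rw [if_neg hab]
    split_ifs with h
    · have hba : b < a := lt_of_le_of_ne (Nat.lt_succ_iff.mp h.1) (Ne.symm hab)
      have hne : ι a ≠ ι b := D.apply_ne_of_lt_kplus ι hba (by omega)
      rw [← formₗ_apply, map_neg, formₗ_apply, D.form_symm, D.form_alpha_omega,
        if_neg (Ne.symm hne), neg_zero]
    · rw [← formₗ_apply, map_zero]

end Word

end SSDatum

theorem stmt19_general (D : SSDatum) (ξ : D.I → ℤ) (hξ : D.IsHeight ξ)
    (r : ℕ) (ι : Fin r → D.I)
    (hadapt : D.Adapted ξ (List.ofFn ι)) :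
    ∀ a b : Fin r, D.kplus ι b < r →
      ∑ u : Fin r, D.lamW ι a u * (D.bW ι u b : ℚ) =
        if a = b then -2 * (D.d (ι a) : ℚ) else 0 := by
  intro a b hb
  simp only [D.lamW_eq, sub_mul, mul_assoc, Finset.sum_sub_distrib, ← Finset.mul_sum,
    D.sum_form_mul_bW, D.form_colWeightSum_succ ι hξ hadapt hb,
    D.colWeightSum_zero ι hξ hadapt hb]
  rw [← SSDatum.formₗ_apply, map_zero]
  split_ifs <;> ring

/-- Let `Q` be a Dynkin quiver on `Δ` and `w̃ = (i_1,…,i_r)` a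
`Q`-adapted sequence in `I`. Then `(Λ^{w̃}·B^{w̃})_{s,t} = −2 d_{i_s}·δ(s=t)` for all
`s ∈ J` and `t ∈ J_e`; in particular the pair `(Λ^{w̃}, B^{w̃})` is compatible. -/
theorem stmt19 (D : SSDatum) (ξ : D.I → ℤ) (hξ : D.IsHeight ξ)
    (r : ℕ) (hr : 1 ≤ r) (ι : Fin r → D.I)
    (hadapt : D.Adapted ξ (List.ofFn ι)) :
    ∀ a b : Fin r, D.kplus ι b < r →
      ∑ u : Fin r, D.lamW ι a u * (D.bW ι u b : ℚ) =
        if a = b then -2 * (D.d (ι a) : ℚ) else 0 :=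
  stmt19_general D ξ hξ r ι hadapt
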